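/- Let K ≥ 1, d ≥ K, n ≥ 1, and λ_{W2}, λ_{W1}, λ_{H1} > 0. Then the infimum over (W₂, W₁, H̄₁) ∈ ℝ^{K×d} × ℝ^{d×d} × ℝ^{d×K} of (1/(2K))‖W₂W₁H̄₁ − I_K‖_F² + (λ_{W2}/2)‖W₂‖_F² + (λ_{W1}/2)‖W₁‖_F² + (nλ_{H1}/2)‖H̄₁‖_F² equals the infimum over (W, H̄₁) ∈ ℝ^{K×d} × ℝ^{d×K} of (1/(2K))‖W·H̄₁ − I_K‖_F² + (nλ_{H1}/2)‖H̄₁‖_F² + √(λ_{W2}·λ_{W1})·‖W‖_*. -/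

import Mathlib

/-!
The objective depends on `(W₂, W₁)` only through `W = W₂W₁` and the penalty
`(λ₂/2)‖W₂‖² + (λ₁/2)‖W₁‖²`, whose minimum over all factorizations of `W` is `√(λ₂λ₁)‖W‖_*`.

The lower bound comes from `‖W₂W₁‖_* ≤ ‖W₂‖_F ‖W₁‖_F` and AM–GM. For the former, write
`‖Z‖_* = tr(UᴴZ)` with `U = Z (ZᴴZ)^{-1/2}` (pseudo-inverse), a partial isometry: then
`tr(Uᴴ A B) = ⟪AᴴU, B⟫_F ≤ ‖AᴴU‖_F ‖B‖_F ≤ ‖A‖_F ‖B‖_F`. The bound is attained by a rescaling of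
the balanced factorization `W = (W |W|^{-1/2}) |W|^{1/2}`, `|W| = (WᴴW)^{1/2}`.
-/

open Matrix Finset

noncomputable section

/-- Squared Frobenius norm of a real matrix. -/
def frobSq {m n : Type*} [Fintype m] [Fintype n] (A : Matrix m n ℝ) : ℝ :=
  ∑ i, ∑ j, (A i j) ^ 2

/-- The positive semidefinite square root of a positive semidefinite matrix
(the definition `Matrix.PosSemidef.sqrt` of the older Mathlib, since removed). -/
def posSemidefSqrtOld {n : Type*} [Fintype n] [DecidableEq n] {A : Matrix n n ℝ}
    (hA : A.PosSemidef) : Matrix n n ℝ :=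
  (hA.isHermitian.eigenvectorUnitary : Matrix n n ℝ) *
    diagonal ((√·) ∘ hA.isHermitian.eigenvalues) *
    (star hA.isHermitian.eigenvectorUnitary : Matrix n n ℝ)

/-- Nuclear norm of a real matrix: trace of the PSD square root of `ZᵀZ`
(= `ZᴴZ` over `ℝ`), i.e., the sum of the singular values. -/
def nuclearNorm {m n : Type*} [Fintype m] [Fintype n] [DecidableEq n]
    (Z : Matrix m n ℝ) : ℝ :=
  (posSemidefSqrtOld (Matrix.posSemidef_conjTranspose_mul_self Z)).trace

namespace Matrix.IsHermitian
open Unitary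

variable {n : Type*} [Fintype n] [DecidableEq n] {A : Matrix n n ℝ} (hA : A.IsHermitian)

lemma cfc_mul_cfc (f g : ℝ → ℝ) : hA.cfc f * hA.cfc g = hA.cfc (f * g) := by
  simp only [IsHermitian.cfc, ← map_mul, diagonal_mul_diagonal]
  rfl

lemma cfc_sub (f g : ℝ → ℝ) : hA.cfc (f - g) = hA.cfc f - hA.cfc g := by
  simp only [IsHermitian.cfc, ← map_sub, diagonal_sub]
  rfl

lemma cfc_one : hA.cfc 1 = 1 := by
  rw [IsHermitian.cfc, ← map_one (conjStarAlgAut ℝ _ hA.eigenvectorUnitary), ← diagonal_one]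
  rfl

lemma cfc_id : hA.cfc id = A := by
  conv_rhs => rw [hA.spectral_theorem]
  rfl

lemma conjTranspose_cfc (f : ℝ → ℝ) : (hA.cfc f)ᴴ = hA.cfc f := by
  rw [IsHermitian.cfc, ← star_eq_conjTranspose, ← map_star, star_eq_conjTranspose,
    diagonal_conjTranspose]
  rfl

lemma trace_cfc (f : ℝ → ℝ) : (hA.cfc f).trace = ∑ i, f (hA.eigenvalues i) := by
  rw [IsHermitian.cfc, conjStarAlgAut_apply, trace_mul_cycle, coe_star_mul_self, one_mul,
    trace_diagonal]
  rfl

lemma cfc_congr {f g : ℝ → ℝ} (h : ∀ i, f (hA.eigenvalues i) = g (hA.eigenvalues i)) :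
    hA.cfc f = hA.cfc g := by
  simp only [IsHermitian.cfc, Function.comp_def, h]

end Matrix.IsHermitian

section Frobenius

variable {l m n : Type*} [Fintype l] [Fintype m] [Fintype n]

lemma frobSq_eq_trace (A : Matrix m n ℝ) : frobSq A = (Aᴴ * A).trace := by
  simp only [frobSq, trace, diag_apply, mul_apply, conjTranspose_apply, star_trivial, sq]
  exact Finset.sum_comm

lemma frobSq_nonneg (A : Matrix m n ℝ) : 0 ≤ frobSq A := by
  unfold frobSq
  positivity

lemma frobSq_eq_zero {A : Matrix m n ℝ} (h : frobSq A = 0) : A = 0 := by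
  ext i j
  simp only [frobSq] at h
  rw [Fintype.sum_eq_zero_iff_of_nonneg (fun i => by positivity)] at h
  exact pow_eq_zero_iff two_ne_zero |>.mp <|
    congrFun ((Fintype.sum_eq_zero_iff_of_nonneg (fun j => by positivity)).mp (congrFun h i)) j

lemma frobSq_smul (c : ℝ) (A : Matrix m n ℝ) : frobSq (c • A) = c ^ 2 * frobSq A := by
  simp [frobSq, Finset.mul_sum, mul_pow]

lemma frobSq_conjTranspose (A : Matrix m n ℝ) : frobSq Aᴴ = frobSq A := by
  simp only [frobSq, conjTranspose_apply, star_trivial]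
  exact Finset.sum_comm

lemma trace_conjTranspose_mul_le (X Y : Matrix m n ℝ) :
    (Xᴴ * Y).trace ≤ √(frobSq X) * √(frobSq Y) := by
  simpa only [trace, diag_apply, mul_apply, conjTranspose_apply, star_trivial, frobSq,
    ← Fintype.sum_prod_type', Finset.sum_comm (γ := n)] using
    Real.sum_mul_le_sqrt_mul_sqrt Finset.univ (fun p : m × n => X p.1 p.2) (fun p => Y p.1 p.2)

lemma frobSq_mul_eq_trace_of_isStarProjection {P : Matrix n n ℝ} (hP : IsStarProjection P)
    (Y : Matrix m n ℝ) : frobSq (Y * P) = (Yᴴ * Y * P).trace := by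
  rw [frobSq_eq_trace, conjTranspose_mul, ← star_eq_conjTranspose P, hP.isSelfAdjoint.star_eq,
    Matrix.mul_assoc, trace_mul_comm, Matrix.mul_assoc, Matrix.mul_assoc, hP.isIdempotentElem.eq,
    ← Matrix.mul_assoc]

lemma frobSq_mul_le_of_isStarProjection [DecidableEq n] {P : Matrix n n ℝ}
    (hP : IsStarProjection P) (Y : Matrix m n ℝ) : frobSq (Y * P) ≤ frobSq Y := by
  have hsplit : frobSq Y = frobSq (Y * P) + frobSq (Y * (1 - P)) := by
    rw [frobSq_mul_eq_trace_of_isStarProjection hP,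
      frobSq_mul_eq_trace_of_isStarProjection hP.one_sub, Matrix.mul_sub, Matrix.mul_one,
      trace_sub, frobSq_eq_trace]
    ring
  linarith [frobSq_nonneg (Y * (1 - P))]

lemma frobSq_mul_partialIsometry_le [DecidableEq m] {U : Matrix m n ℝ} (hU : U * Uᴴ * U = U)
    (X : Matrix l m ℝ) : frobSq (X * U) ≤ frobSq X := by
  have hP : IsStarProjection (U * Uᴴ) :=
    ⟨by rw [IsIdempotentElem, ← Matrix.mul_assoc, hU],
      by rw [IsSelfAdjoint, star_eq_conjTranspose, conjTranspose_mul, conjTranspose_conjTranspose]⟩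
  calc frobSq (X * U) = frobSq (X * (U * Uᴴ)) := by
        rw [frobSq_mul_eq_trace_of_isStarProjection hP, frobSq_eq_trace, conjTranspose_mul,
          Matrix.mul_assoc, trace_mul_comm]
        simp only [Matrix.mul_assoc]
    _ ≤ frobSq X := frobSq_mul_le_of_isStarProjection hP X

end Frobenius

lemma Matrix.IsHermitian.frobSq_cfc {n : Type*} [Fintype n] [DecidableEq n] {A : Matrix n n ℝ}
    (hA : A.IsHermitian) (f : ℝ → ℝ) : frobSq (hA.cfc f) = ∑ i, f (hA.eigenvalues i) ^ 2 := by
  rw [frobSq_eq_trace, hA.conjTranspose_cfc, hA.cfc_mul_cfc, hA.trace_cfc]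
  simp only [Pi.mul_apply, sq]

section Gram

variable {m n : Type*} [Fintype m] [Fintype n] [DecidableEq n] (Z : Matrix m n ℝ)
  (hZ : (Zᴴ * Z).IsHermitian)

lemma eigenvalues_conjTranspose_mul_self_nonneg (i : n) : 0 ≤ hZ.eigenvalues i :=
  (posSemidef_conjTranspose_mul_self Z).eigenvalues_nonneg i

lemma conjTranspose_mul_cfc_mul_mul_cfc (f g : ℝ → ℝ) :
    (Z * hZ.cfc f)ᴴ * (Z * hZ.cfc g) = hZ.cfc (fun x => f x * x * g x) := by
  calc (Z * hZ.cfc f)ᴴ * (Z * hZ.cfc g) = hZ.cfc f * hZ.cfc id * hZ.cfc g := by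
        rw [hZ.cfc_id, conjTranspose_mul, hZ.conjTranspose_cfc]
        simp only [Matrix.mul_assoc]
    _ = hZ.cfc (fun x => f x * x * g x) := by rw [hZ.cfc_mul_cfc, hZ.cfc_mul_cfc]; rfl

lemma frobSq_mul_cfc (f : ℝ → ℝ) :
    frobSq (Z * hZ.cfc f) = ∑ i, f (hZ.eigenvalues i) ^ 2 * hZ.eigenvalues i := by
  rw [frobSq_eq_trace, conjTranspose_mul_cfc_mul_mul_cfc, hZ.trace_cfc]
  ring_nf

lemma mul_cfc_eq_self {f : ℝ → ℝ} (hf : ∀ i, hZ.eigenvalues i ≠ 0 → f (hZ.eigenvalues i) = 1) :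
    Z * hZ.cfc f = Z := by
  have hker : Z * hZ.cfc (1 - f) = 0 := by
    refine frobSq_eq_zero ((frobSq_mul_cfc Z hZ _).trans (Finset.sum_eq_zero fun i _ => ?_))
    by_cases h : hZ.eigenvalues i = 0
    · rw [h, mul_zero]
    · rw [Pi.sub_apply, hf i h, Pi.one_apply, sub_self]
      ring
  rw [hZ.cfc_sub, hZ.cfc_one, Matrix.mul_sub, Matrix.mul_one, sub_eq_zero] at hker
  exact hker.symm

end Gram

section NuclearNorm

variable {l m n : Type*} [Fintype l] [Fintype m] [Fintype n] [DecidableEq n]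

lemma nuclearNorm_eq_sum_sqrt_eigenvalues (Z : Matrix m n ℝ) :
    nuclearNorm Z = ∑ i, √((isHermitian_conjTranspose_mul_self Z).eigenvalues i) :=
  (isHermitian_conjTranspose_mul_self Z).trace_cfc _

lemma nuclearNorm_nonneg (Z : Matrix m n ℝ) : 0 ≤ nuclearNorm Z := by
  rw [nuclearNorm_eq_sum_sqrt_eigenvalues]
  positivity

/-- The balanced factorization `W = (W |W|^{-1/2}) |W|^{1/2}`, where `|W| = (WᴴW)^{1/2}` and
`|W|^{-1/2}` is the Moore–Penrose pseudo-inverse of `|W|^{1/2}`. -/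
lemma exists_mul_eq_frobSq_eq_nuclearNorm (W : Matrix m n ℝ) :
    ∃ (W₂ : Matrix m n ℝ) (W₁ : Matrix n n ℝ),
      W₂ * W₁ = W ∧ frobSq W₂ = nuclearNorm W ∧ frobSq W₁ = nuclearNorm W := by
  have hW := isHermitian_conjTranspose_mul_self W
  have hpos i : 0 ≤ hW.eigenvalues i := eigenvalues_conjTranspose_mul_self_nonneg W hW i
  refine ⟨W * hW.cfc (fun x => (√√x)⁻¹), hW.cfc (fun x => √√x), ?_, ?_, ?_⟩
  · rw [Matrix.mul_assoc, hW.cfc_mul_cfc]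
    refine mul_cfc_eq_self W hW fun i hi => inv_mul_cancel₀ ?_
    positivity [(hpos i).lt_of_ne' hi]
  · rw [frobSq_mul_cfc, nuclearNorm_eq_sum_sqrt_eigenvalues]
    refine Finset.sum_congr rfl fun i _ => ?_
    rw [inv_pow, Real.sq_sqrt (Real.sqrt_nonneg _), inv_mul_eq_div, Real.div_sqrt]
  · rw [hW.frobSq_cfc, nuclearNorm_eq_sum_sqrt_eigenvalues]
    simp only [Real.sq_sqrt (Real.sqrt_nonneg _)]

lemma nuclearNorm_mul_le (A : Matrix l m ℝ) (B : Matrix m n ℝ) :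
    nuclearNorm (A * B) ≤ √(frobSq A) * √(frobSq B) := by
  classical
  have hZ := isHermitian_conjTranspose_mul_self (A * B)
  have hpos i : 0 ≤ hZ.eigenvalues i := eigenvalues_conjTranspose_mul_self_nonneg (A * B) hZ i
  set r : ℝ → ℝ := fun x => (√x)⁻¹
  set U := A * B * hZ.cfc r
  have hU : U * Uᴴ * U = U := by
    rw [Matrix.mul_assoc, conjTranspose_mul_cfc_mul_mul_cfc, Matrix.mul_assoc, hZ.cfc_mul_cfc]
    have key (x : ℝ) (hx : 0 ≤ x) : r x * (r x * x * r x) = r x := by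
      rcases hx.eq_or_lt with rfl | hx
      · simp [r]
      · simp only [r]
        field_simp
        rw [Real.sq_sqrt hx.le]
    exact congrArg (A * B * ·) (hZ.cfc_congr fun i => key _ (hpos i))
  have htrace : nuclearNorm (A * B) = (Uᴴ * (A * B)).trace := by
    conv_rhs => rw [← mul_cfc_eq_self (A * B) hZ (f := 1) fun _ _ => rfl]
    rw [conjTranspose_mul_cfc_mul_mul_cfc, hZ.trace_cfc, nuclearNorm_eq_sum_sqrt_eigenvalues]
    refine Finset.sum_congr rfl fun i _ => ?_
    simp only [r, Pi.one_apply, mul_one, inv_mul_eq_div, Real.div_sqrt]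
  calc nuclearNorm (A * B) = ((Aᴴ * U)ᴴ * B).trace := by
        rw [htrace]
        simp only [conjTranspose_mul, conjTranspose_conjTranspose, Matrix.mul_assoc]
    _ ≤ √(frobSq (Aᴴ * U)) * √(frobSq B) := trace_conjTranspose_mul_le _ _
    _ ≤ √(frobSq A) * √(frobSq B) := by
        gcongr
        simpa only [frobSq_conjTranspose] using frobSq_mul_partialIsometry_le hU Aᴴ

lemma sqrt_mul_mul_nuclearNorm_mul_le {a b : ℝ} (ha : 0 ≤ a) (hb : 0 ≤ b)
    (A : Matrix l m ℝ) (B : Matrix m n ℝ) :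
    √(a * b) * nuclearNorm (A * B) ≤ a / 2 * frobSq A + b / 2 * frobSq B := by
  set x := √a * √(frobSq A)
  set y := √b * √(frobSq B)
  calc √(a * b) * nuclearNorm (A * B) ≤ √(a * b) * (√(frobSq A) * √(frobSq B)) := by
        gcongr
        exact nuclearNorm_mul_le A B
    _ = x * y := by rw [Real.sqrt_mul ha]; ring
    _ ≤ (x ^ 2 + y ^ 2) / 2 := by linarith [two_mul_le_add_sq x y]
    _ = a / 2 * frobSq A + b / 2 * frobSq B := by
        rw [mul_pow, mul_pow, Real.sq_sqrt ha, Real.sq_sqrt hb, Real.sq_sqrt (frobSq_nonneg A),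
          Real.sq_sqrt (frobSq_nonneg B)]
        ring

lemma exists_mul_eq_add_frobSq_eq_sqrt_mul_mul_nuclearNorm {a b : ℝ} (ha : 0 < a) (hb : 0 < b)
    (W : Matrix m n ℝ) : ∃ (W₂ : Matrix m n ℝ) (W₁ : Matrix n n ℝ),
      W₂ * W₁ = W ∧ a / 2 * frobSq W₂ + b / 2 * frobSq W₁ = √(a * b) * nuclearNorm W := by
  obtain ⟨V₂, V₁, hV, hV₂, hV₁⟩ := exists_mul_eq_frobSq_eq_nuclearNorm W
  have hsa : 0 < √a := Real.sqrt_pos.2 ha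
  have hsb : 0 < √b := Real.sqrt_pos.2 hb
  set t := √(√b / √a)
  have ht : t ^ 2 = √b / √a := Real.sq_sqrt (by positivity)
  have ht0 : t ≠ 0 := by positivity
  refine ⟨t • V₂, t⁻¹ • V₁, ?_, ?_⟩
  · rw [Matrix.smul_mul, Matrix.mul_smul, smul_smul, mul_inv_cancel₀ ht0, one_smul, hV]
  · rw [frobSq_smul, frobSq_smul, hV₂, hV₁, inv_pow, ht, inv_div, Real.sqrt_mul ha.le]
    field_simp
    rw [Real.sq_sqrt ha.le, Real.sq_sqrt hb.le]
    ring

end NuclearNorm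

namespace Real

lemma iInf_le_of_nonneg {ι : Sort*} {f : ι → ℝ} (hf : ∀ i, 0 ≤ f i) (i : ι) : ⨅ j, f j ≤ f i :=
  ciInf_le ⟨0, Set.forall_mem_range.2 hf⟩ i

lemma iInf₂_le_of_nonneg {ι κ : Sort*} {f : ι → κ → ℝ} (hf : ∀ i j, 0 ≤ f i j) (i : ι) (j : κ) :
    ⨅ i, ⨅ j, f i j ≤ f i j :=
  (iInf_le_of_nonneg (fun i => iInf_nonneg (hf i)) i).trans (iInf_le_of_nonneg (hf i) j)

lemma iInf₃_le_of_nonneg {ι κ ν : Sort*} {f : ι → κ → ν → ℝ} (hf : ∀ i j k, 0 ≤ f i j k)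
    (i : ι) (j : κ) (k : ν) : ⨅ i, ⨅ j, ⨅ k, f i j k ≤ f i j k :=
  (iInf_le_of_nonneg (fun i => iInf_nonneg fun j => iInf_nonneg (hf i j)) i).trans
    (iInf₂_le_of_nonneg (hf i) j k)

end Real

theorem three_factor_reduces_to_nuclear_on_weights_general
    (K d n : ℕ) (lW2 lW1 lH1 : ℝ) (hlW2 : 0 < lW2) (hlW1 : 0 < lW1) (hlH1 : 0 < lH1) :
    (⨅ W2 : Matrix (Fin K) (Fin d) ℝ, ⨅ W1 : Matrix (Fin d) (Fin d) ℝ,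
      ⨅ Hb1 : Matrix (Fin d) (Fin K) ℝ,
        (1 / (2 * (K : ℝ)) * frobSq (W2 * W1 * Hb1 - 1)
          + lW2 / 2 * frobSq W2 + lW1 / 2 * frobSq W1
          + ((n : ℝ) * lH1) / 2 * frobSq Hb1))
    = ⨅ W : Matrix (Fin K) (Fin d) ℝ, ⨅ Hb1 : Matrix (Fin d) (Fin K) ℝ,
        (1 / (2 * (K : ℝ)) * frobSq (W * Hb1 - 1)
          + ((n : ℝ) * lH1) / 2 * frobSq Hb1
          + Real.sqrt (lW2 * lW1) * nuclearNorm W) := by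
  apply le_antisymm
  · refine le_ciInf fun W => le_ciInf fun Hb1 => ?_
    obtain ⟨W2, W1, rfl, hpenalty⟩ :=
      exists_mul_eq_add_frobSq_eq_sqrt_mul_mul_nuclearNorm hlW2 hlW1 W
    refine (Real.iInf₃_le_of_nonneg (fun _ _ _ => ?_) W2 W1 Hb1).trans (by linarith)
    simp only [frobSq]
    positivity
  · refine le_ciInf fun W2 => le_ciInf fun W1 => le_ciInf fun Hb1 => ?_
    refine (Real.iInf₂_le_of_nonneg (fun W _ => ?_) (W2 * W1) Hb1).trans
      (by linarith [sqrt_mul_mul_nuclearNorm_mul_le hlW2.le hlW1.le W2 W1])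
    have hW := nuclearNorm_nonneg W
    simp only [frobSq]
    positivity

/-- Reduction of the three-factor extended UFM objective to a two-factor objective with
a nuclear-norm penalty on the composite weight matrix `W = W₂W₁`:
`inf_{W₂,W₁,H̄₁} (1/(2K))‖W₂W₁H̄₁ − I‖² + (λ_{W2}/2)‖W₂‖² + (λ_{W1}/2)‖W₁‖² + (nλ_{H1}/2)‖H̄₁‖²
 = inf_{W,H̄₁} (1/(2K))‖WH̄₁ − I‖² + (nλ_{H1}/2)‖H̄₁‖² + √(λ_{W2}λ_{W1})‖W‖_*`. -/
theorem three_factor_reduces_to_nuclear_on_weights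
    (K d n : ℕ) (hK : 1 ≤ K) (hd : K ≤ d) (hn : 1 ≤ n)
    (lW2 lW1 lH1 : ℝ) (hlW2 : 0 < lW2) (hlW1 : 0 < lW1) (hlH1 : 0 < lH1) :
    (⨅ W2 : Matrix (Fin K) (Fin d) ℝ, ⨅ W1 : Matrix (Fin d) (Fin d) ℝ,
      ⨅ Hb1 : Matrix (Fin d) (Fin K) ℝ,
        (1 / (2 * (K : ℝ)) * frobSq (W2 * W1 * Hb1 - 1)
          + lW2 / 2 * frobSq W2 + lW1 / 2 * frobSq W1
          + ((n : ℝ) * lH1) / 2 * frobSq Hb1))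
    = ⨅ W : Matrix (Fin K) (Fin d) ℝ, ⨅ Hb1 : Matrix (Fin d) (Fin K) ℝ,
        (1 / (2 * (K : ℝ)) * frobSq (W * Hb1 - 1)
          + ((n : ℝ) * lH1) / 2 * frobSq Hb1
          + Real.sqrt (lW2 * lW1) * nuclearNorm W) :=
  three_factor_reduces_to_nuclear_on_weights_general K d n lW2 lW1 lH1 hlW2 hlW1 hlH1
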